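/- Fix an integer K ≥ 2, α : Fin K → ℝ with α_i > 0 for all i, set α₀ = Σ_i α_i, and let y : Fin K → ℝ be a fixed vector with Σ_i y_i = 1. Let M be the matrix with entries M_{ij} = δ_{ij}·ψ¹(α_i) − ψ¹(α₀) (the Fisher Information Matrix of the Dirichlet distribution). Then the expected Fisher-information-weighted squared error satisfies ∫_T f_α(x)·Σ_{i,j} (y_i − p_i(x))·M_{ij}·(y_j − p_j(x)) dx = Σ_{j=0}^{K-1} [ (y_j − α_j/α₀)² + α_j·(α₀ − α_j)/(α₀²·(α₀+1)) ]·ψ¹(α_j). -/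

import Mathlib

open MeasureTheory Real

/-- The coordinates of a point on the probability simplex parameterized by
`x ∈ ℝ^{K-1}`: `p_i(x) = x_i` for `i < K − 1` and `p_{K-1}(x) = 1 − Σ_j x_j`. -/
noncomputable def dirP (K : ℕ) (x : Fin (K - 1) → ℝ) (i : Fin K) : ℝ :=
  if h : (i : ℕ) < K - 1 then x ⟨i, h⟩ else 1 - ∑ j, x j

/-- The open parameter domain `T = {x : x_i > 0 for all i and Σ_i x_i < 1} ⊆ ℝ^{K−1}`. -/
def dirT (K : ℕ) : Set (Fin (K - 1) → ℝ) :=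
  {x | (∀ i, 0 < x i) ∧ ∑ i, x i < 1}

/-- The Dirichlet density `f_α(x) = (Γ(α₀)/∏_i Γ(α_i)) · ∏_i p_i(x)^{α_i − 1}`. -/
noncomputable def dirDensity (K : ℕ) (α : Fin K → ℝ) (x : Fin (K - 1) → ℝ) : ℝ :=
  (Real.Gamma (∑ i, α i) / ∏ i, Real.Gamma (α i)) * ∏ i, dirP K x i ^ (α i - 1)

/-- The digamma function `ψ`: the derivative of `log Γ`. -/
noncomputable def digamma (x : ℝ) : ℝ :=
  deriv (fun y : ℝ => Real.log (Real.Gamma y)) x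

/-- The trigamma function `ψ¹`: the second derivative of `log Γ`. -/
noncomputable def trigamma (x : ℝ) : ℝ :=
  deriv (deriv fun y : ℝ => Real.log (Real.Gamma y)) x


/-!
Since `∑ i, (y i - p i) = 0`, the rank-one part `ψ¹(α₀) 𝟙𝟙ᵀ` of the Fisher matrix contributes
nothing, and the loss is `∑ i, ψ¹(α_i) E[(y_i - p_i)²] = ∑ i, ψ¹(α_i) ((y_i - E p_i)² + Var p_i)`.

The moments come from the Dirichlet integral
`∫_T ∏ i, p_i ^ (β_i - 1) = B(β) = ∏ Γ(β_i) / Γ(∑ β_i)`: multiplying the density by `p_i` shifts `α_i` by one, and `Γ(s + 1) = s Γ(s)` gives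
`E p_i = α_i / α₀` and `E p_i² = α_i (α_i + 1) / (α₀ (α₀ + 1))`.

The Dirichlet integral is proved by induction on the dimension, integrating out the last
coordinate `t` first (Tonelli). On the slice over `z` it runs over `0 < t < s := 1 - ∑ z`, where
the integrand is a beta integral on an interval of length `s`, equal to `B(a, b) s ^ (a + b - 1)`:
what remains is the Dirichlet integral in one dimension less, with the last two parameters
`a, b` merged into `a + b`.
-/

open ProbabilityTheory
open scoped ENNReal

section BetaIntegral

lemma intervalIntegrable_rpow_mul_sub_rpow {a b s : ℝ} (ha : 0 < a) (hb : 0 < b) (hs : 0 < s) :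
    IntervalIntegrable (fun t : ℝ => t ^ (a - 1) * (s - t) ^ (b - 1)) volume 0 s := by
  have hmid : 0 < s / 2 := half_pos hs
  refine IntervalIntegrable.trans (b := s / 2) ?_ ?_
  · refine (intervalIntegral.intervalIntegrable_rpow' (by linarith)).mul_continuousOn ?_
    refine ContinuousOn.rpow_const (by fun_prop) fun t ht => Or.inl ?_
    rw [Set.uIcc_of_le hmid.le] at ht
    linarith [ht.2]
  · have hright : IntervalIntegrable (fun t : ℝ => (s - t) ^ (b - 1)) volume (s / 2) s := by
      simpa [show s - s / 2 = s / 2 by ring] using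
        ((intervalIntegral.intervalIntegrable_rpow' (r := b - 1) (a := 0) (b := s / 2)
          (by linarith)).comp_sub_left s).symm
    refine hright.continuousOn_mul ?_
    refine ContinuousOn.rpow_const continuousOn_id fun t ht => Or.inl ?_
    rw [Set.uIcc_of_le (by linarith)] at ht
    exact (hmid.trans_le ht.1).ne'

lemma integral_rpow_mul_sub_rpow {a b s : ℝ} (ha : 0 < a) (hb : 0 < b) (hs : 0 < s) :
    ∫ t in (0 : ℝ)..s, t ^ (a - 1) * (s - t) ^ (b - 1) = s ^ (a + b - 1) * beta a b := by
  have hcpow : Set.EqOn (fun t : ℝ => ((t ^ (a - 1) * (s - t) ^ (b - 1) : ℝ) : ℂ))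
      (fun t : ℝ => (t : ℂ) ^ ((a : ℂ) - 1) * ((s : ℂ) - t) ^ ((b : ℂ) - 1)) (Set.uIcc 0 s) := by
    intro t ht
    rw [Set.uIcc_of_le hs.le] at ht
    push_cast [Complex.ofReal_cpow ht.1, Complex.ofReal_cpow (sub_nonneg.2 ht.2)]
    rfl
  have hbeta : Complex.betaIntegral a b = (beta a b : ℂ) := by
    rw [Complex.betaIntegral_eq_Gamma_mul_div _ _ (by simpa) (by simpa), beta,
      ← Complex.ofReal_add, Complex.Gamma_ofReal, Complex.Gamma_ofReal, Complex.Gamma_ofReal]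
    push_cast
    rfl
  apply Complex.ofReal_injective
  rw [← intervalIntegral.integral_ofReal, intervalIntegral.integral_congr hcpow,
    Complex.betaIntegral_scaled _ _ hs, hbeta]
  push_cast [Complex.ofReal_cpow hs.le]
  ring_nf

lemma lintegral_Ioo_rpow_mul_sub_rpow {a b s : ℝ} (ha : 0 < a) (hb : 0 < b) (hs : 0 < s) :
    ∫⁻ t in Set.Ioo 0 s, ENNReal.ofReal (t ^ (a - 1) * (s - t) ^ (b - 1))
      = ENNReal.ofReal (s ^ (a + b - 1) * beta a b) := by
  have hint := (intervalIntegrable_rpow_mul_sub_rpow ha hb hs).1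
  rw [Measure.restrict_congr_set Ioo_ae_eq_Ioc, ← ofReal_integral_eq_lintegral_ofReal hint,
    ← intervalIntegral.integral_of_le hs.le, integral_rpow_mul_sub_rpow ha hb hs]
  exact ae_restrict_of_forall_mem measurableSet_Ioc fun t ht =>
    mul_nonneg (rpow_nonneg ht.1.le _) (rpow_nonneg (sub_nonneg.2 ht.2) _)

end BetaIntegral

lemma lintegral_eq_lintegral_snoc {α : Type*} [MeasureSpace α] [SigmaFinite (volume : Measure α)]
    {n : ℕ} {f : (Fin (n + 1) → α) → ℝ≥0∞} (hf : Measurable f) :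
    ∫⁻ x, f x = ∫⁻ z, ∫⁻ t, f (Fin.snoc z t) := by
  let e := MeasurableEquiv.piFinSuccAbove (fun _ => α) (Fin.last n)
  calc ∫⁻ x, f x = ∫⁻ p, f (e.symm p) :=
        ((volume_preserving_piFinSuccAbove (fun _ => α) (Fin.last n)).symm.lintegral_comp hf).symm
    _ = ∫⁻ z, ∫⁻ t, f (e.symm (t, z)) := by
        rw [Measure.volume_eq_prod]
        exact lintegral_prod_symm _ (hf.comp e.symm.measurable).aemeasurable
    _ = ∫⁻ z, ∫⁻ t, f (Fin.snoc z t) := by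
        simp [e, MeasurableEquiv.piFinSuccAbove_symm_apply, Fin.insertNthEquiv, Fin.insertNth_last']

noncomputable def multiBeta {K : ℕ} (β : Fin K → ℝ) : ℝ :=
  (∏ i, Gamma (β i)) / Gamma (∑ i, β i)

lemma multiBeta_pos {n : ℕ} {β : Fin (n + 1) → ℝ} (hβ : ∀ i, 0 < β i) : 0 < multiBeta β :=
  div_pos (Finset.prod_pos fun i _ => Gamma_pos_of_pos (hβ i))
    (Gamma_pos_of_pos (Finset.sum_pos (fun i _ => hβ i) Finset.univ_nonempty))

section Shift

variable {K : ℕ} (β : Fin K → ℝ) (i : Fin K)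

lemma sum_add_single (r : ℝ) : ∑ k, (β + Pi.single i r : Fin K → ℝ) k = ∑ k, β k + r := by
  simp [Finset.sum_add_distrib]

lemma multiBeta_add_single_one (hi : β i ≠ 0) (hsum : ∑ k, β k ≠ 0) :
    multiBeta (β + Pi.single i 1) = β i / (∑ k, β k) * multiBeta β := by
  have hGamma : ∀ k, Gamma ((β + Pi.single i 1 : Fin K → ℝ) k)
      = (if k = i then β i else 1) * Gamma (β k) := by
    intro k
    by_cases hk : k = i
    · subst hk
      simp [Gamma_add_one hi]
    · simp [hk]
  rw [multiBeta, multiBeta, sum_add_single, Gamma_add_one hsum]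
  simp only [hGamma, Finset.prod_mul_distrib, Fintype.prod_ite_eq']
  ring

end Shift

def aggregateLast {n : ℕ} (β : Fin (n + 2) → ℝ) : Fin (n + 1) → ℝ :=
  Fin.snoc (Fin.init (Fin.init β)) (β (Fin.last n).castSucc + β (Fin.last (n + 1)))

section Aggregate

variable {n : ℕ} (β : Fin (n + 2) → ℝ)

lemma sum_aggregateLast : ∑ i, aggregateLast β i = ∑ i, β i := by
  simp [aggregateLast, Fin.sum_univ_castSucc, Fin.init, add_assoc]

lemma multiBeta_eq_beta_mul_multiBeta_aggregateLast (ha : 0 < β (Fin.last n).castSucc)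
    (hb : 0 < β (Fin.last (n + 1))) :
    multiBeta β = beta (β (Fin.last n).castSucc) (β (Fin.last (n + 1)))
      * multiBeta (aggregateLast β) := by
  have hab : Gamma (β (Fin.last n).castSucc + β (Fin.last (n + 1))) ≠ 0 :=
    (Gamma_pos_of_pos (add_pos ha hb)).ne'
  rw [multiBeta, multiBeta, sum_aggregateLast, beta]
  simp only [aggregateLast, Fin.prod_univ_castSucc (n := n + 1), Fin.prod_univ_castSucc (n := n),
    Fin.snoc_castSucc, Fin.snoc_last, Fin.init]
  field_simp

end Aggregate

noncomputable def dirKernel (K : ℕ) (β : Fin K → ℝ) (x : Fin (K - 1) → ℝ) : ℝ :=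
  ∏ i, dirP K x i ^ (β i - 1)

section Simplex

variable {n : ℕ}

@[simp]
lemma dirP_castSucc (x : Fin n → ℝ) (j : Fin n) : dirP (n + 1) x j.castSucc = x j := by
  simp [dirP]

@[simp]
lemma dirP_last (x : Fin n → ℝ) : dirP (n + 1) x (Fin.last n) = 1 - ∑ j, x j := by
  simp [dirP]

lemma sum_dirP (x : Fin n → ℝ) : ∑ i, dirP (n + 1) x i = 1 := by
  simp [Fin.sum_univ_castSucc]

lemma dirP_pos {x : Fin n → ℝ} (hx : x ∈ dirT (n + 1)) (i : Fin (n + 1)) :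
    0 < dirP (n + 1) x i := by
  induction i using Fin.lastCases with
  | last => simpa using hx.2
  | cast j => simpa using hx.1 j

lemma dirKernel_nonneg (β : Fin (n + 1) → ℝ) {x : Fin n → ℝ} (hx : x ∈ dirT (n + 1)) :
    0 ≤ dirKernel (n + 1) β x :=
  Finset.prod_nonneg fun i _ => rpow_nonneg (dirP_pos hx i).le _

@[fun_prop]
lemma measurable_dirP (K : ℕ) (i : Fin K) : Measurable fun x => dirP K x i := by
  unfold dirP
  split_ifs <;> fun_prop

@[fun_prop]
lemma measurable_dirKernel (K : ℕ) (β : Fin K → ℝ) : Measurable (dirKernel K β) := by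
  unfold dirKernel
  fun_prop

lemma measurableSet_dirT (K : ℕ) : MeasurableSet (dirT K) := by
  simp only [dirT, Set.ofPred_and, Set.ofPred_forall]
  exact (MeasurableSet.iInter fun i => measurableSet_lt measurable_const (measurable_pi_apply i))
    |>.inter (measurableSet_lt (by fun_prop) measurable_const)

lemma snoc_mem_dirT_iff (z : Fin n → ℝ) (t : ℝ) :
    (Fin.snoc z t : Fin (n + 1) → ℝ) ∈ dirT (n + 2) ↔
      z ∈ dirT (n + 1) ∧ t ∈ Set.Ioo 0 (1 - ∑ j, z j) := by
  -- `dirT (n + 2)` lives on `Fin (n + 2 - 1) → ℝ`, which `simp` does not see as `Fin (n + 1) → ℝ`.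
  change ((∀ i : Fin (n + 1), 0 < Fin.snoc (α := fun _ => ℝ) z t i) ∧ ∑ i, Fin.snoc z t i < 1) ↔
    ((∀ j, 0 < z j) ∧ ∑ j, z j < 1) ∧ t ∈ Set.Ioo 0 (1 - ∑ j, z j)
  simp only [Fin.forall_fin_succ', Fin.snoc_castSucc, Fin.snoc_last, Fin.sum_snoc, Set.mem_Ioo]
  constructor
  · rintro ⟨⟨hz, ht⟩, hsum⟩
    exact ⟨⟨hz, by linarith⟩, ht, by linarith⟩
  · rintro ⟨⟨hz, -⟩, ht, hts⟩
    exact ⟨⟨hz, ht⟩, by linarith⟩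

end Simplex

section AggregateKernel

variable {n : ℕ} (β : Fin (n + 2) → ℝ)

lemma dirKernel_snoc (z : Fin n → ℝ) (t : ℝ) :
    dirKernel (n + 2) β (Fin.snoc z t)
      = (∏ j, z j ^ (β j.castSucc.castSucc - 1)) * (t ^ (β (Fin.last n).castSucc - 1)
        * ((1 - ∑ j, z j) - t) ^ (β (Fin.last (n + 1)) - 1)) := by
  simp only [dirKernel, Fin.prod_univ_castSucc (n := n + 1), Fin.prod_univ_castSucc (n := n)]
  simp only [dirP_castSucc, dirP_last, Fin.snoc_castSucc, Fin.snoc_last, Fin.sum_snoc]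
  ring_nf

lemma dirKernel_aggregateLast (z : Fin n → ℝ) :
    dirKernel (n + 1) (aggregateLast β) z
      = (∏ j, z j ^ (β j.castSucc.castSucc - 1))
        * (1 - ∑ j, z j) ^ (β (Fin.last n).castSucc + β (Fin.last (n + 1)) - 1) := by
  simp [dirKernel, aggregateLast, Fin.prod_univ_castSucc, Fin.init]

end AggregateKernel

lemma dirKernel_add_single {n : ℕ} (β : Fin (n + 1) → ℝ) (i : Fin (n + 1)) (r : ℝ)
    {x : Fin n → ℝ} (hx : x ∈ dirT (n + 1)) :
    dirKernel (n + 1) (β + Pi.single i r) x = dirKernel (n + 1) β x * dirP (n + 1) x i ^ r := by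
  have hsplit : ∀ k, dirP (n + 1) x k ^ ((β + Pi.single i r : Fin (n + 1) → ℝ) k - 1)
      = dirP (n + 1) x k ^ (β k - 1) * dirP (n + 1) x k ^ (Pi.single i r : Fin (n + 1) → ℝ) k := by
    intro k
    rw [← rpow_add (dirP_pos hx k), Pi.add_apply, add_sub_right_comm]
  rw [dirKernel, dirKernel, Finset.prod_congr rfl fun k _ => hsplit k, Finset.prod_mul_distrib]
  congr 1
  rw [Fintype.prod_eq_single i fun k hk => by simp [hk], Pi.single_eq_same]

lemma dirDensity_eq_dirKernel_div (K : ℕ) (α : Fin K → ℝ) (x : Fin (K - 1) → ℝ) :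
    dirDensity K α x = dirKernel K α x / multiBeta α := by
  rw [dirDensity, dirKernel, multiBeta, div_div_eq_mul_div]
  ring

section DirichletIntegral

variable {n : ℕ}

lemma lintegral_indicator_dirKernel_snoc (β : Fin (n + 2) → ℝ)
    (ha : 0 < β (Fin.last n).castSucc) (hb : 0 < β (Fin.last (n + 1))) (z : Fin n → ℝ) :
    ∫⁻ t, (dirT (n + 2)).indicator (fun x => ENNReal.ofReal (dirKernel (n + 2) β x))
        (Fin.snoc z t)
      = (dirT (n + 1)).indicator (fun z => ENNReal.ofReal
          (beta (β (Fin.last n).castSucc) (β (Fin.last (n + 1)))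
            * dirKernel (n + 1) (aggregateLast β) z)) z := by
  by_cases hz : z ∈ dirT (n + 1)
  · set s := 1 - ∑ j, z j with hs_def
    have hs : 0 < s := sub_pos.2 hz.2
    have hP : 0 ≤ ∏ j, z j ^ (β j.castSucc.castSucc - 1) :=
      Finset.prod_nonneg fun j _ => rpow_nonneg (hz.1 j).le _
    have hslice : ∀ t, (dirT (n + 2)).indicator
        (fun x => ENNReal.ofReal (dirKernel (n + 2) β x)) (Fin.snoc z t)
        = (Set.Ioo 0 s).indicator (fun t => ENNReal.ofReal (∏ j, z j ^ (β j.castSucc.castSucc - 1))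
          * ENNReal.ofReal (t ^ (β (Fin.last n).castSucc - 1)
            * (s - t) ^ (β (Fin.last (n + 1)) - 1))) t := by
      intro t
      simp only [Set.indicator, snoc_mem_dirT_iff, hz, true_and, dirKernel_snoc,
        ENNReal.ofReal_mul hP]
      rfl
    rw [Set.indicator_of_mem hz, lintegral_congr hslice, lintegral_indicator measurableSet_Ioo,
      lintegral_const_mul' _ _ ENNReal.ofReal_ne_top, lintegral_Ioo_rpow_mul_sub_rpow ha hb hs,
      ← ENNReal.ofReal_mul hP, dirKernel_aggregateLast, ← hs_def]
    ring_nf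
  · rw [Set.indicator_of_notMem hz]
    have hslice : ∀ t, (dirT (n + 2)).indicator
        (fun x => ENNReal.ofReal (dirKernel (n + 2) β x)) (Fin.snoc z t) = 0 :=
      fun t => Set.indicator_of_notMem (fun h => hz ((snoc_mem_dirT_iff z t).1 h).1) _
    simp only [hslice, lintegral_zero]

lemma lintegral_dirKernel (β : Fin (n + 1) → ℝ) (hβ : ∀ i, 0 < β i) :
    ∫⁻ x in dirT (n + 1), ENNReal.ofReal (dirKernel (n + 1) β x)
      = ENNReal.ofReal (multiBeta β) := by
  induction n with
  | zero =>
    have hT : dirT 1 = Set.univ := by ext x; simp [dirT]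
    have hK : ∀ x, dirKernel 1 β x = 1 := fun x => by simp [dirKernel, dirP]
    simp [hT, hK, multiBeta, (Gamma_pos_of_pos (hβ 0)).ne', volume_pi]
  | succ n ih =>
    have ha := hβ (Fin.last n).castSucc
    have hb := hβ (Fin.last (n + 1))
    have hβ' : ∀ i, 0 < aggregateLast β i := fun i => by
      induction i using Fin.lastCases with
      | last => simpa [aggregateLast] using add_pos ha hb
      | cast j => simpa [aggregateLast, Fin.init] using hβ _
    calc ∫⁻ x in dirT (n + 2), ENNReal.ofReal (dirKernel (n + 2) β x)
        = ∫⁻ z, ∫⁻ t, (dirT (n + 2)).indicator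
            (fun x => ENNReal.ofReal (dirKernel (n + 2) β x)) (Fin.snoc z t) := by
          rw [← lintegral_indicator (measurableSet_dirT _)]
          refine lintegral_eq_lintegral_snoc (α := ℝ) (n := n) ?_
          exact (measurable_dirKernel _ β).ennreal_ofReal.indicator (measurableSet_dirT _)
      _ = ∫⁻ z in dirT (n + 1), ENNReal.ofReal (beta (β (Fin.last n).castSucc)
            (β (Fin.last (n + 1)))) * ENNReal.ofReal (dirKernel (n + 1) (aggregateLast β) z) := by
          simp only [lintegral_indicator_dirKernel_snoc β ha hb,
            ENNReal.ofReal_mul (beta_pos ha hb).le]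
          exact lintegral_indicator (measurableSet_dirT (n + 1)) _
      _ = ENNReal.ofReal (multiBeta β) := by
          rw [lintegral_const_mul' _ _ ENNReal.ofReal_ne_top, ih _ hβ', ← ENNReal.ofReal_mul
            (beta_pos ha hb).le, multiBeta_eq_beta_mul_multiBeta_aggregateLast β ha hb]

lemma integrableOn_dirKernel {β : Fin (n + 1) → ℝ} (hβ : ∀ i, 0 < β i) :
    IntegrableOn (dirKernel (n + 1) β) (dirT (n + 1)) := by
  have hnonneg : 0 ≤ᵐ[volume.restrict (dirT (n + 1))] dirKernel (n + 1) β :=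
    ae_restrict_of_forall_mem (measurableSet_dirT _) fun x hx => dirKernel_nonneg β hx
  refine ⟨(measurable_dirKernel _ β).aestronglyMeasurable, ?_⟩
  rw [hasFiniteIntegral_iff_ofReal hnonneg, lintegral_dirKernel β hβ]
  exact ENNReal.ofReal_lt_top

lemma integral_dirKernel {β : Fin (n + 1) → ℝ} (hβ : ∀ i, 0 < β i) :
    ∫ x in dirT (n + 1), dirKernel (n + 1) β x = multiBeta β := by
  have hnonneg : 0 ≤ᵐ[volume.restrict (dirT (n + 1))] dirKernel (n + 1) β :=
    ae_restrict_of_forall_mem (measurableSet_dirT _) fun x hx => dirKernel_nonneg β hx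
  rw [integral_eq_lintegral_of_nonneg_ae hnonneg
    (measurable_dirKernel _ β).aestronglyMeasurable, lintegral_dirKernel β hβ,
    ENNReal.toReal_ofReal (multiBeta_pos hβ).le]

end DirichletIntegral

section Moments

variable {n : ℕ} {α : Fin (n + 1) → ℝ}

lemma add_single_pos (hα : ∀ i, 0 < α i) (i : Fin (n + 1)) {r : ℝ} (hr : 0 ≤ r)
    (k : Fin (n + 1)) : 0 < (α + Pi.single i r : Fin (n + 1) → ℝ) k := by
  rw [Pi.add_apply, Pi.single_apply]
  split_ifs
  · exact add_pos_of_pos_of_nonneg (hα k) hr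
  · simpa using hα k

lemma dirDensity_mul_pow_eq (i : Fin (n + 1)) (m : ℕ) {x : Fin n → ℝ} (hx : x ∈ dirT (n + 1)) :
    dirDensity (n + 1) α x * dirP (n + 1) x i ^ m
      = dirKernel (n + 1) (α + Pi.single i (m : ℝ)) x / multiBeta α := by
  rw [dirDensity_eq_dirKernel_div, dirKernel_add_single _ _ _ hx, rpow_natCast]
  ring

lemma integrableOn_dirDensity_mul_pow (hα : ∀ i, 0 < α i) (i : Fin (n + 1)) (m : ℕ) :
    IntegrableOn (fun x => dirDensity (n + 1) α x * dirP (n + 1) x i ^ m) (dirT (n + 1)) :=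
  IntegrableOn.congr_fun ((integrableOn_dirKernel (add_single_pos hα i m.cast_nonneg)).div_const _)
    (fun _ hx => (dirDensity_mul_pow_eq i m hx).symm) (measurableSet_dirT _)

lemma integral_dirDensity_mul_pow (hα : ∀ i, 0 < α i) (i : Fin (n + 1)) (m : ℕ) :
    ∫ x in dirT (n + 1), dirDensity (n + 1) α x * dirP (n + 1) x i ^ m
      = multiBeta (α + Pi.single i (m : ℝ)) / multiBeta α := by
  rw [setIntegral_congr_fun (measurableSet_dirT _) fun _ hx => dirDensity_mul_pow_eq i m hx,
    integral_div, integral_dirKernel (add_single_pos hα i m.cast_nonneg)]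

end Moments

section SecondMoment

variable {n : ℕ} {α : Fin (n + 1) → ℝ}

lemma dirDensity_mul_sq_sub_expand (i : Fin (n + 1)) (c : ℝ) (x : Fin n → ℝ) :
    dirDensity (n + 1) α x * (c - dirP (n + 1) x i) ^ 2
      = c ^ 2 * (dirDensity (n + 1) α x * dirP (n + 1) x i ^ 0)
        - 2 * c * (dirDensity (n + 1) α x * dirP (n + 1) x i ^ 1)
        + dirDensity (n + 1) α x * dirP (n + 1) x i ^ 2 := by
  ring

lemma integrableOn_dirDensity_mul_sq_sub (hα : ∀ i, 0 < α i) (i : Fin (n + 1)) (c : ℝ) :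
    IntegrableOn (fun x => dirDensity (n + 1) α x * (c - dirP (n + 1) x i) ^ 2) (dirT (n + 1)) := by
  simp only [dirDensity_mul_sq_sub_expand i c]
  exact ((((integrableOn_dirDensity_mul_pow hα i 0).const_mul _).sub
    ((integrableOn_dirDensity_mul_pow hα i 1).const_mul _)).add
    (integrableOn_dirDensity_mul_pow hα i 2))

lemma integral_dirDensity_mul_sq_sub (hα : ∀ i, 0 < α i) (i : Fin (n + 1)) (c : ℝ) :
    ∫ x in dirT (n + 1), dirDensity (n + 1) α x * (c - dirP (n + 1) x i) ^ 2
      = (c - α i / ∑ k, α k) ^ 2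
        + α i * (∑ k, α k - α i) / ((∑ k, α k) ^ 2 * (∑ k, α k + 1)) := by
  set α₀ := ∑ k, α k with hα₀
  have hα₀_pos : 0 < α₀ := Finset.sum_pos (fun k _ => hα k) Finset.univ_nonempty
  have hB_ne : multiBeta α ≠ 0 := (multiBeta_pos hα).ne'
  have hmoment1 : multiBeta (α + Pi.single i 1) = α i / α₀ * multiBeta α :=
    multiBeta_add_single_one α i (hα i).ne' hα₀_pos.ne'
  have hmoment2 :
      multiBeta (α + Pi.single i 2) = (α i + 1) / (α₀ + 1) * (α i / α₀ * multiBeta α) := by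
    rw [show (2 : ℝ) = 1 + 1 by norm_num, Pi.single_add, ← add_assoc,
      multiBeta_add_single_one _ i (add_single_pos hα i zero_le_one i).ne' (by
        rw [sum_add_single]; positivity), sum_add_single, hmoment1]
    simp [← hα₀]
  have hint := integrableOn_dirDensity_mul_pow hα i
  have hconst := (hint 0).const_mul (c ^ 2)
  have hlinear := (hint 1).const_mul (2 * c)
  have hlin : ∫ x in dirT (n + 1), dirDensity (n + 1) α x * (c - dirP (n + 1) x i) ^ 2
      = c ^ 2 * (∫ x in dirT (n + 1), dirDensity (n + 1) α x * dirP (n + 1) x i ^ 0)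
        - 2 * c * (∫ x in dirT (n + 1), dirDensity (n + 1) α x * dirP (n + 1) x i ^ 1)
        + ∫ x in dirT (n + 1), dirDensity (n + 1) α x * dirP (n + 1) x i ^ 2 := by
    rw [setIntegral_congr_fun (measurableSet_dirT _) fun x _ => dirDensity_mul_sq_sub_expand i c x,
      ← integral_const_mul, ← integral_const_mul, ← integral_sub hconst hlinear]
    exact integral_add (hconst.sub hlinear) (hint 2)
  rw [hlin, integral_dirDensity_mul_pow hα, integral_dirDensity_mul_pow hα,
    integral_dirDensity_mul_pow hα]
  push_cast
  rw [Pi.single_zero, add_zero, hmoment1, hmoment2]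
  field_simp
  ring

end SecondMoment

lemma sum_sum_mul_diag_sub_const_mul_of_sum_eq_zero {ι : Type*} [Fintype ι] [DecidableEq ι]
    (d w : ι → ℝ) (c : ℝ) (hd : ∑ i, d i = 0) :
    ∑ i, ∑ j, d i * ((if i = j then w i else 0) - c) * d j = ∑ i, w i * d i ^ 2 := by
  have hrow : ∀ i, ∑ j, d i * ((if i = j then w i else 0) - c) * d j
      = w i * d i ^ 2 - c * d i * ∑ j, d j := fun i => by
    simp only [mul_sub, sub_mul, Finset.sum_sub_distrib, mul_ite, ite_mul, mul_zero, zero_mul,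
      Finset.sum_ite_eq, Finset.mem_univ, if_true, Finset.mul_sum]
    ring_nf
  simp [hrow, hd]

theorem dirichlet_expected_fim_mse_general
    (K : ℕ) (α : Fin K → ℝ) (hα : ∀ i, 0 < α i)
    (y : Fin K → ℝ) (hy : ∑ i, y i = 1) :
    (∫ x in dirT K, dirDensity K α x *
        ∑ i, ∑ j, (y i - dirP K x i) *
          ((if i = j then trigamma (α i) else 0) - trigamma (∑ k, α k)) *
          (y j - dirP K x j))
      = ∑ j, ((y j - α j / (∑ i, α i)) ^ 2
            + α j * ((∑ i, α i) - α j) / ((∑ i, α i) ^ 2 * ((∑ i, α i) + 1)))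
          * trigamma (α j) := by
  obtain ⟨n, rfl⟩ : ∃ n, K = n + 1 :=
    Nat.exists_eq_succ_of_ne_zero (by rintro rfl; simp at hy)
  have hquad : ∀ x : Fin n → ℝ, ∑ i, ∑ j, (y i - dirP (n + 1) x i) *
      ((if i = j then trigamma (α i) else 0) - trigamma (∑ k, α k)) * (y j - dirP (n + 1) x j)
      = ∑ i, trigamma (α i) * (y i - dirP (n + 1) x i) ^ 2 := fun x =>
    sum_sum_mul_diag_sub_const_mul_of_sum_eq_zero _ _ _ (by
      rw [Finset.sum_sub_distrib, hy, sum_dirP, sub_self])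
  simp only [hquad, Finset.mul_sum, mul_left_comm (dirDensity _ α _)]
  rw [integral_finsetSum _ fun i _ =>
    (integrableOn_dirDensity_mul_sq_sub hα i (y i)).const_mul _]
  refine Finset.sum_congr rfl fun i _ => ?_
  rw [integral_const_mul, integral_dirDensity_mul_sq_sub hα, mul_comm]

/-- Closed form of the Fisher-information-weighted MSE loss (𝓘-MSE):
`E_{p∼Dir(α)}[(y − p)ᵀ 𝓘(α) (y − p)]
  = Σ_j [(y_j − α_j/α₀)² + α_j(α₀ − α_j)/(α₀²(α₀+1))] ψ¹(α_j)`. -/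
theorem dirichlet_expected_fim_mse
    (K : ℕ) (hK : 2 ≤ K) (α : Fin K → ℝ) (hα : ∀ i, 0 < α i)
    (y : Fin K → ℝ) (hy : ∑ i, y i = 1) :
    (∫ x in dirT K, dirDensity K α x *
        ∑ i, ∑ j, (y i - dirP K x i) *
          ((if i = j then trigamma (α i) else 0) - trigamma (∑ k, α k)) *
          (y j - dirP K x j))
      = ∑ j, ((y j - α j / (∑ i, α i)) ^ 2
            + α j * ((∑ i, α i) - α j) / ((∑ i, α i) ^ 2 * ((∑ i, α i) + 1)))
          * trigamma (α j) :=
  dirichlet_expected_fim_mse_general K α hα y hy
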